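/- Let Q be an abstract key polynomial for μ and f ∈ K[X] with Q-expansion f = Σ f_i Q^i. Then ε_{μ_Q}(f) = ε_μ(Q) if and only if S_{Q,μ}(f) ≠ {0}, where S_{Q,μ}(f) = {i : μ(f_i Q^i) = μ_Q(f)}. -/

import Mathlib

open Polynomial

/-- An additive (Krull) valuation with values in `Γ ∪ {∞}`. -/
structure IsValAdd {R : Type*} [CommRing R] {Γ : Type*} [AddCommGroup Γ] [LinearOrder Γ] [IsOrderedAddMonoid Γ]
    (v : R → WithTop Γ) : Prop where
  map_mul : ∀ a b, v (a * b) = v a + v b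
  map_add : ∀ a b, min (v a) (v b) ≤ v (a + b)
  map_one : v 1 = 0
  map_zero : v 0 = ⊤
  supp : ∀ a, v a = ⊤ → a = 0

/-- The valuation associated to a pair `(a, δ)`:
`ν_{a,δ}(∑ aᵢ (X - a)ⁱ) = min_i (ν aᵢ + i•δ)`. -/
noncomputable def pairVal {K : Type*} [Field K] {Γ : Type*} [AddCommGroup Γ] [LinearOrder Γ] [IsOrderedAddMonoid Γ]
    (ν : K → WithTop Γ) (a : K) (δ : Γ) (f : K[X]) : WithTop Γ :=
  (Finset.range (f.natDegree + 1)).inf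
    fun i => ν ((Polynomial.taylor a f).coeff i) + ((i • δ : Γ) : WithTop Γ)

/-- The coefficients of the `Q`-expansion of a polynomial, by iterated euclidean division. -/
noncomputable def qCoeff {K : Type*} [Field K] (Q : K[X]) : ℕ → K[X] → K[X]
  | 0, f => f %ₘ Q
  | n + 1, f => qCoeff Q n (f /ₘ Q)

/-- The truncation `μ_Q` of `μ` along `Q` : `μ_Q(f) = min_i μ(fᵢ Qⁱ)` over the
`Q`-expansion `f = ∑ fᵢ Qⁱ`. -/
noncomputable def trunc {K : Type*} [Field K] {Γ : Type*} [AddCommGroup Γ] [LinearOrder Γ] [IsOrderedAddMonoid Γ]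
    (μ : K[X] → WithTop Γ) (Q : K[X]) (f : K[X]) : WithTop Γ :=
  (Finset.range (f.natDegree + 1)).inf fun i => μ (qCoeff Q i f * Q ^ i)

/-- `ε_μ(f) < ε_μ(Q)`, stated in cross-multiplied form (valid in the divisible hull). -/
def EpsLt {K : Type*} [Field K] {Γ : Type*} [AddCommGroup Γ] [LinearOrder Γ] [IsOrderedAddMonoid Γ]
    (μ : K[X] → WithTop Γ) (f Q : K[X]) : Prop :=
  ∃ j, 1 ≤ j ∧ μ (hasseDeriv j Q) ≠ ⊤ ∧
    ∀ i, 1 ≤ i → j • μ f + i • μ (hasseDeriv j Q) < i • μ Q + j • μ (hasseDeriv i f)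

/-- `ε_{μ₁}(f) ≤ ε_{μ₂}(g)`, stated in cross-multiplied form. -/
def EpsLE {K L : Type*} [Field K] [Field L] {Γ : Type*} [AddCommGroup Γ] [LinearOrder Γ] [IsOrderedAddMonoid Γ]
    (μ₁ : K[X] → WithTop Γ) (f : K[X]) (μ₂ : L[X] → WithTop Γ) (g : L[X]) : Prop :=
  ∀ i, 1 ≤ i → ∃ j, 1 ≤ j ∧
    j • μ₁ f + i • μ₂ (hasseDeriv j g) ≤ i • μ₂ g + j • μ₁ (hasseDeriv i f)

/-- `Q` is an abstract key polynomial for `μ`. -/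
def IsABKP {K : Type*} [Field K] {Γ : Type*} [AddCommGroup Γ] [LinearOrder Γ] [IsOrderedAddMonoid Γ]
    (μ : K[X] → WithTop Γ) (Q : K[X]) : Prop :=
  Q.Monic ∧ ∀ f : K[X], f ≠ 0 → f.degree < Q.degree → EpsLt μ f Q

/-!
Let `b` be the largest index with `ε_μ(Q) = (μ Q - μ (∂_b Q)) / b`. Since `Q` is a key polynomial,
every `c` with `deg c < deg Q` has all its slopes `(μ c - μ (∂_k c)) / k` strictly below `ε_μ(Q)`.
This rules out cancellation in `g h = r + Q s` for such `g, h`, so that `μ_Q` is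
super-multiplicative. By Leibniz's rule every term `∂_k fᵢ · ∂_l Qⁱ` of `∂_j f` then has slope at
most `ε_μ(Q)`, whence `ε_{μ_Q}(f) ≤ ε_μ(Q)`; if `S_{Q,μ}(f) = {0}` all these slopes are strict.
Conversely, if `i₀ ≥ 1` is the largest element of `S_{Q,μ}(f)`, the term `fᵢ₀ · ∂_{b i₀}(Q^i₀)` is
the unique smallest term of `∂_{b i₀} f`, and the slope of `f` at order `b i₀` reaches `ε_μ(Q)`.
-/

namespace WithTop

section AddMonoid

variable {α : Type*} [AddMonoid α] {x : WithTop α} {n : ℕ}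

lemma nsmul_top_of_pos (hn : 0 < n) : n • (⊤ : WithTop α) = ⊤ := by
  obtain ⟨n, rfl⟩ := Nat.exists_eq_add_of_lt hn
  rw [succ_nsmul, add_top]

lemma nsmul_ne_top (hx : x ≠ ⊤) (n : ℕ) : n • x ≠ ⊤ := by
  lift x to α using hx
  exact coe_ne_top

end AddMonoid

variable {Γ : Type*} [AddCommGroup Γ] [LinearOrder Γ] [IsOrderedAddMonoid Γ]
  {x y : WithTop Γ} {n : ℕ}

lemma nsmul_lt_nsmul_iff (hn : 0 < n) : n • x < n • y ↔ x < y := by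
  refine ⟨lt_imp_lt_of_le_imp_le fun h => nsmul_le_nsmul_right h n, fun h => ?_⟩
  lift x to Γ using h.ne_top
  cases y with
  | top => rw [nsmul_top_of_pos hn]; exact (nsmul_ne_top coe_ne_top n).lt_top
  | coe y => exact_mod_cast nsmul_lt_nsmul_right hn.ne' (coe_lt_coe.mp h)

lemma nsmul_le_nsmul_iff (hn : 0 < n) : n • x ≤ n • y ↔ x ≤ y := by
  simpa only [not_lt] using (nsmul_lt_nsmul_iff hn (x := y) (y := x)).not

end WithTop

section Slope

/-- `(a - a') / m ≤ (c - c') / n`, with the denominators cleared. -/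
def SlopeLE {M : Type*} [AddCommMonoid M] [LE M] (a a' : M) (m : ℕ) (c c' : M) (n : ℕ) : Prop :=
  n • a + m • c' ≤ m • c + n • a'

def SlopeLT {M : Type*} [AddCommMonoid M] [LT M] (a a' : M) (m : ℕ) (c c' : M) (n : ℕ) : Prop :=
  n • a + m • c' < m • c + n • a'

variable {M : Type*} [AddCommMonoid M] [LinearOrder M] {a a' b b' c c' : M} {k m n : ℕ}

lemma SlopeLT.slopeLE (h : SlopeLT a a' m c c' n) : SlopeLE a a' m c c' n := h.le

lemma not_slopeLT : ¬ SlopeLT a a' m c c' n ↔ SlopeLE c c' n a a' m := not_lt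

lemma not_slopeLE : ¬ SlopeLE a a' m c c' n ↔ SlopeLT c c' n a a' m := not_le

lemma slopeLE_total : SlopeLE a a' m c c' n ∨ SlopeLE c c' n a a' m := le_total _ _

lemma slopeLE_zero (a : M) : SlopeLE a a 0 c c' n := by
  simp [SlopeLE, add_comm]

variable [IsOrderedAddMonoid M]

lemma SlopeLE.mono (h : SlopeLE a a' m c c' n) (hb : b ≤ a) (hb' : a' ≤ b') :
    SlopeLE b b' m c c' n :=
  (add_le_add_left (nsmul_le_nsmul_right hb n) _).trans
    (h.trans (add_le_add_right (nsmul_le_nsmul_right hb' n) _))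

lemma SlopeLT.mono (h : SlopeLT a a' m c c' n) (hb : b ≤ a) (hb' : a' ≤ b') :
    SlopeLT b b' m c c' n :=
  (add_le_add_left (nsmul_le_nsmul_right hb n) _).trans_lt
    (h.trans_le (add_le_add_right (nsmul_le_nsmul_right hb' n) _))

lemma SlopeLE.add (h₁ : SlopeLE a a' m c c' n) (h₂ : SlopeLE b b' k c c' n) :
    SlopeLE (a + b) (a' + b') (m + k) c c' n := by
  unfold SlopeLE at *
  convert add_le_add h₁ h₂ using 1 <;> module

end Slope

section SlopeWithTop

variable {Γ : Type*} [AddCommGroup Γ] [LinearOrder Γ] [IsOrderedAddMonoid Γ]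
  {a a' b b' c c' : WithTop Γ} {k m n : ℕ}

lemma slopeLE_top (hn : 0 < n) : SlopeLE a ⊤ m c c' n := by
  simp [SlopeLE, WithTop.nsmul_top_of_pos hn]

lemma slopeLT_top (hn : 0 < n) (ha : a ≠ ⊤) (hc' : c' ≠ ⊤) : SlopeLT a ⊤ m c c' n := by
  rw [SlopeLT, WithTop.nsmul_top_of_pos hn, add_top, lt_top_iff_ne_top, WithTop.add_ne_top]
  exact ⟨WithTop.nsmul_ne_top ha n, WithTop.nsmul_ne_top hc' m⟩

lemma SlopeLE.slopeLT_of_lt (h : SlopeLE a a' m c c' n) (hb : b < a) (hn : 0 < n)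
    (hc' : c' ≠ ⊤) : SlopeLT b a' m c c' n :=
  (WithTop.add_lt_add_right (WithTop.nsmul_ne_top hc' m)
    ((WithTop.nsmul_lt_nsmul_iff hn).2 hb)).trans_le h

lemma SlopeLT.add_slopeLE (h₁ : SlopeLT a a' m c c' n) (h₂ : SlopeLE b b' k c c' n)
    (hb : b ≠ ⊤) (hc' : c' ≠ ⊤) : SlopeLT (a + b) (a' + b') (m + k) c c' n := by
  unfold SlopeLT SlopeLE at *
  have hfin : n • b + k • c' ≠ ⊤ :=
    WithTop.add_ne_top.2 ⟨WithTop.nsmul_ne_top hb n, WithTop.nsmul_ne_top hc' k⟩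
  convert WithTop.add_lt_add_of_lt_of_le hfin h₁ h₂ using 1 <;> module

lemma SlopeLE.add_slopeLT (h₁ : SlopeLE a a' m c c' n) (h₂ : SlopeLT b b' k c c' n)
    (ha : a ≠ ⊤) (hc' : c' ≠ ⊤) : SlopeLT (a + b) (a' + b') (m + k) c c' n := by
  rw [add_comm a, add_comm a', add_comm m]
  exact h₂.add_slopeLE h₁ ha hc'

/-- Scale the two inequalities by `k` and `m` and cancel the finite middle terms. -/
lemma SlopeLE.trans (h₁ : SlopeLE a a' m b b' n) (h₂ : SlopeLE b b' n c c' k) (hn : 0 < n)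
    (hb : b ≠ ⊤) (hb' : b' ≠ ⊤) : SlopeLE a a' m c c' k := by
  unfold SlopeLE at *
  have hfin : (k * m) • b' + (m * k) • b ≠ ⊤ :=
    WithTop.add_ne_top.2 ⟨WithTop.nsmul_ne_top hb' _, WithTop.nsmul_ne_top hb _⟩
  have key : n • (k • a + m • c') + ((k * m) • b' + (m * k) • b)
      ≤ n • (m • c + k • a') + ((k * m) • b' + (m * k) • b) := by
    convert add_le_add (nsmul_le_nsmul_right h₁ k) (nsmul_le_nsmul_right h₂ m) using 1 <;>
      module
  exact (WithTop.nsmul_le_nsmul_iff hn).1 ((WithTop.add_le_add_iff_right hfin).1 key)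

lemma SlopeLT.trans_slopeLE (h₁ : SlopeLT a a' m b b' n) (h₂ : SlopeLE b b' n c c' k)
    (hn : 0 < n) (hk : 0 < k) (hb : b ≠ ⊤) (hb' : b' ≠ ⊤) (hc' : c' ≠ ⊤) :
    SlopeLT a a' m c c' k := by
  unfold SlopeLT SlopeLE at *
  have hfin : (k * m) • b' + (m * k) • b ≠ ⊤ :=
    WithTop.add_ne_top.2 ⟨WithTop.nsmul_ne_top hb' _, WithTop.nsmul_ne_top hb _⟩
  have hfin' : m • (k • b + n • c') ≠ ⊤ := WithTop.nsmul_ne_top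
    (WithTop.add_ne_top.2 ⟨WithTop.nsmul_ne_top hb _, WithTop.nsmul_ne_top hc' _⟩) m
  have key : n • (k • a + m • c') + ((k * m) • b' + (m * k) • b)
      < n • (m • c + k • a') + ((k * m) • b' + (m * k) • b) := by
    convert WithTop.add_lt_add_of_lt_of_le hfin' ((WithTop.nsmul_lt_nsmul_iff hk).2 h₁)
      (nsmul_le_nsmul_right h₂ m) using 1 <;> module
  exact (WithTop.nsmul_lt_nsmul_iff hn).1 ((WithTop.add_lt_add_iff_right hfin).1 key)

lemma slopeLT_add_nsmul_iff (hn : 0 < n) (hc : c ≠ ⊤) {x : WithTop Γ} {i : ℕ} :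
    SlopeLT (x + i • c) a' (n * i) c c' n ↔ x + i • c' < a' := by
  rw [SlopeLT,
    show n • (x + i • c) + (n * i) • c' = n • (x + i • c') + (n * i) • c by module,
    add_comm ((n * i) • c), WithTop.add_lt_add_iff_right (WithTop.nsmul_ne_top hc _),
    WithTop.nsmul_lt_nsmul_iff hn]

lemma slopeLT_add_iff (hn : 0 < n) (hc : c ≠ ⊤) {x : WithTop Γ} :
    SlopeLT (x + c) a' n c c' n ↔ x + c' < a' := by
  simpa using slopeLT_add_nsmul_iff hn hc (x := x) (i := 1)

lemma slopeLE_add_nsmul_iff (hn : 0 < n) (hc : c ≠ ⊤) {x : WithTop Γ} {i : ℕ} :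
    SlopeLE c c' n (x + i • c) a' (n * i) ↔ a' ≤ x + i • c' := by
  rw [← not_slopeLT, slopeLT_add_nsmul_iff hn hc, not_lt]

end SlopeWithTop

lemma Finset.exists_last_greatest_of_total {α : Type*} [LinearOrder α] {r : α → α → Prop}
    {s : Finset α} (hs : s.Nonempty) (htotal : ∀ a ∈ s, ∀ b ∈ s, r a b ∨ r b a)
    (htrans : ∀ a ∈ s, ∀ b ∈ s, ∀ c ∈ s, r a b → r b c → r a c) :
    ∃ b ∈ s, (∀ a ∈ s, r a b) ∧ ∀ a ∈ s, b < a → ¬ r b a := by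
  classical
  induction s using Finset.induction_on_max with
  | empty => exact absurd hs Finset.not_nonempty_empty
  | insert c s hc ih =>
    have hrefl : r c c := (htotal c (mem_insert_self c s) c (mem_insert_self c s)).elim id id
    rcases s.eq_empty_or_nonempty with rfl | hs'
    · exact ⟨c, mem_insert_self c ∅, by simpa using hrefl, by simp⟩
    obtain ⟨b, hb, hmax, hlast⟩ := ih hs'
      (fun x hx y hy => htotal x (mem_insert_of_mem hx) y (mem_insert_of_mem hy))
      (fun x hx y hy z hz => htrans x (mem_insert_of_mem hx) y (mem_insert_of_mem hy) z
        (mem_insert_of_mem hz))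
    by_cases hbc : r b c
    · refine ⟨c, mem_insert_self c s, fun a ha => ?_, fun a ha hca => ?_⟩
      · rcases mem_insert.1 ha with rfl | ha
        · exact hrefl
        · exact htrans a (mem_insert_of_mem ha) b (mem_insert_of_mem hb) c (mem_insert_self c s)
            (hmax a ha) hbc
      · rcases mem_insert.1 ha with rfl | ha
        · exact absurd hca (lt_irrefl a)
        · exact absurd (hc a ha) (not_lt.2 hca.le)
    · refine ⟨b, mem_insert_of_mem hb, fun a ha => ?_, fun a ha hba => ?_⟩
      · rcases mem_insert.1 ha with rfl | ha
        · exact (htotal a (mem_insert_self a s) b (mem_insert_of_mem hb)).resolve_right hbc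
        · exact hmax a ha
      · rcases mem_insert.1 ha with rfl | ha
        · exact hbc
        · exact hlast a ha hba

lemma le_map_sum_of_min_le {M N : Type*} [AddCommMonoid M] [LinearOrder N] [OrderTop N]
    {φ : M → N} (h0 : φ 0 = ⊤) (hadd : ∀ x y, min (φ x) (φ y) ≤ φ (x + y)) {ι : Type*}
    {s : Finset ι} {t : ι → M} {V : N} (h : ∀ i ∈ s, V ≤ φ (t i)) :
    V ≤ φ (∑ i ∈ s, t i) := by
  classical
  induction s using Finset.induction_on with
  | empty => simp [h0]
  | insert a s ha ih =>
    rw [Finset.sum_insert ha]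
    exact (le_min (h a (Finset.mem_insert_self a s))
      (ih fun i hi => h i (Finset.mem_insert_of_mem hi))).trans (hadd _ _)

namespace IsValAdd

variable {R Γ : Type*} [CommRing R] [AddCommGroup Γ] [LinearOrder Γ] [IsOrderedAddMonoid Γ]
  {v : R → WithTop Γ}

def toAddValuation (hv : IsValAdd v) : AddValuation R (WithTop Γ) :=
  AddValuation.of v hv.map_zero hv.map_one hv.map_add hv.map_mul

lemma ne_top (hv : IsValAdd v) {x : R} (hx : x ≠ 0) : v x ≠ ⊤ := fun h => hx (hv.supp x h)

lemma map_pow (hv : IsValAdd v) (x : R) (n : ℕ) : v (x ^ n) = n • v x :=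
  hv.toAddValuation.map_pow x n

lemma map_sub (hv : IsValAdd v) (x y : R) : min (v x) (v y) ≤ v (x - y) :=
  hv.toAddValuation.map_sub x y

lemma map_sum_le_of_lt {ι : Type*} [DecidableEq ι] {s : Finset ι} {t : ι → R} {j₀ : ι}
    {V : WithTop Γ} (hv : IsValAdd v) (hj₀ : j₀ ∈ s) (h₀ : v (t j₀) ≤ V)
    (h : ∀ j ∈ s, j ≠ j₀ → V < v (t j)) : v (∑ j ∈ s, t j) ≤ V := by
  rcases eq_or_ne V ⊤ with rfl | hV
  · exact le_top
  have hrest : V < v (∑ j ∈ s.erase j₀, t j) := hv.toAddValuation.map_lt_sum hV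
    fun j hj => h j (Finset.mem_of_mem_erase hj) (Finset.ne_of_mem_erase hj)
  rw [← Finset.add_sum_erase s t hj₀]
  exact (hv.toAddValuation.map_add_eq_of_lt_left (h₀.trans_lt hrest)).trans_le h₀

lemma map_sub_eq_of_lt_right (hv : IsValAdd v) {x y : R} (h : v y < v x) : v (x - y) = v y :=
  hv.toAddValuation.map_sub_eq_of_lt_right h

end IsValAdd

structure IsPseudoValAdd {R : Type*} [CommRing R] {Γ : Type*} [AddCommGroup Γ] [LinearOrder Γ]
    [IsOrderedAddMonoid Γ] (φ : R → WithTop Γ) : Prop where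
  map_zero : φ 0 = ⊤
  map_add : ∀ x y, min (φ x) (φ y) ≤ φ (x + y)
  le_map_mul : ∀ x y, φ x + φ y ≤ φ (x * y)

lemma IsValAdd.isPseudoValAdd {R Γ : Type*} [CommRing R] [AddCommGroup Γ] [LinearOrder Γ]
    [IsOrderedAddMonoid Γ] {v : R → WithTop Γ} (hv : IsValAdd v) : IsPseudoValAdd v :=
  ⟨hv.map_zero, hv.map_add, fun x y => (hv.map_mul x y).ge⟩

namespace IsPseudoValAdd

variable {R Γ : Type*} [CommRing R] [AddCommGroup Γ] [LinearOrder Γ] [IsOrderedAddMonoid Γ]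

section

variable {φ : R → WithTop Γ}

lemma le_map_sum {ι : Type*} {s : Finset ι} {t : ι → R} {V : WithTop Γ}
    (hφ : IsPseudoValAdd φ) (h : ∀ i ∈ s, V ≤ φ (t i)) : V ≤ φ (∑ i ∈ s, t i) :=
  le_map_sum_of_min_le hφ.map_zero hφ.map_add h

lemma exists_le_map_sum {ι : Type*} {s : Finset ι} (hφ : IsPseudoValAdd φ) (hs : s.Nonempty)
    (t : ι → R) : ∃ i ∈ s, φ (t i) ≤ φ (∑ i ∈ s, t i) := by
  obtain ⟨i, hi, heq⟩ := s.exists_mem_eq_inf hs (φ ∘ t)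
  refine ⟨i, hi, ?_⟩
  rw [← Function.comp_apply (f := φ), ← heq]
  exact hφ.le_map_sum fun j hj => Finset.inf_le (f := φ ∘ t) hj

end

section Polynomial

variable {φ : R[X] → WithTop Γ}

lemma exists_le_map_hasseDeriv_mul (hφ : IsPseudoValAdd φ) (p q : R[X]) (l : ℕ) :
    ∃ k m, k + m = l ∧ φ (hasseDeriv k p * hasseDeriv m q) ≤ φ (hasseDeriv l (p * q)) := by
  obtain ⟨⟨k, m⟩, hkm, hle⟩ :=
    hφ.exists_le_map_sum (s := Finset.HasAntidiagonal.antidiagonal l)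
    ⟨(0, l), Finset.HasAntidiagonal.mem_antidiagonal.2 (zero_add l)⟩
    (fun x => hasseDeriv x.1 p * hasseDeriv x.2 q)
  exact ⟨k, m, Finset.HasAntidiagonal.mem_antidiagonal.1 hkm, by rwa [hasseDeriv_mul]⟩

variable {vp vq c c' : WithTop Γ} {n : ℕ}

lemma slopeLE_hasseDeriv_mul (hφ : IsPseudoValAdd φ) {p q : R[X]}
    (hp : ∀ k, SlopeLE vp (φ (hasseDeriv k p)) k c c' n)
    (hq : ∀ m, SlopeLE vq (φ (hasseDeriv m q)) m c c' n) (l : ℕ) :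
    SlopeLE (vp + vq) (φ (hasseDeriv l (p * q))) l c c' n := by
  obtain ⟨k, m, rfl, hle⟩ := hφ.exists_le_map_hasseDeriv_mul p q l
  exact ((hp k).add (hq m)).mono le_rfl ((hφ.le_map_mul _ _).trans hle)

lemma slopeLE_hasseDeriv_pow (hφ : IsPseudoValAdd φ) (hφ1 : 0 ≤ φ 1) (hn : 0 < n)
    {p : R[X]} (hp : ∀ k, SlopeLE vp (φ (hasseDeriv k p)) k c c' n) :
    ∀ i l, SlopeLE (i • vp) (φ (hasseDeriv l (p ^ i))) l c c' n
  | 0, 0 => by simpa [SlopeLE] using nsmul_nonneg hφ1 n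
  | 0, l + 1 => by
    rw [pow_zero, hasseDeriv_eq_zero_of_lt_natDegree _ _ (by simp), hφ.map_zero]
    exact slopeLE_top hn
  | i + 1, l => by
    rw [succ_nsmul, pow_succ]
    exact hφ.slopeLE_hasseDeriv_mul (hφ.slopeLE_hasseDeriv_pow hφ1 hn hp i) hp l

end Polynomial

end IsPseudoValAdd

section QExpansion

variable {K : Type*} [Field K] {Q : K[X]}

lemma qCoeff_zero_right (Q : K[X]) : ∀ i, qCoeff Q i 0 = 0
  | 0 => zero_modByMonic Q
  | i + 1 => by rw [qCoeff, zero_divByMonic]; exact qCoeff_zero_right Q i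

lemma qCoeff_one_left : ∀ i (f : K[X]), qCoeff 1 i f = 0
  | 0, f => modByMonic_one f
  | i + 1, f => qCoeff_one_left i (f /ₘ 1)

lemma Polynomial.add_divByMonic (hQ : Q.Monic) (f g : K[X]) :
    (f + g) /ₘ Q = f /ₘ Q + g /ₘ Q :=
  (div_modByMonic_unique _ _ hQ
    ⟨by linear_combination modByMonic_add_div f Q + modByMonic_add_div g Q,
      (degree_add_le _ _).trans_lt
        (max_lt (degree_modByMonic_lt f hQ) (degree_modByMonic_lt g hQ))⟩).1

lemma qCoeff_add (hQ : Q.Monic) : ∀ i (f g : K[X]),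
    qCoeff Q i (f + g) = qCoeff Q i f + qCoeff Q i g
  | 0, f, g => add_modByMonic f g
  | i + 1, f, g => by rw [qCoeff, qCoeff, qCoeff, add_divByMonic hQ, qCoeff_add hQ i]

lemma degree_qCoeff_lt (hQ : Q.Monic) : ∀ i (f : K[X]), (qCoeff Q i f).degree < Q.degree
  | 0, f => degree_modByMonic_lt f hQ
  | i + 1, f => degree_qCoeff_lt hQ i (f /ₘ Q)

lemma qCoeff_zero_of_degree_lt (hQ : Q.Monic) {f : K[X]} (hf : f.degree < Q.degree) :
    qCoeff Q 0 f = f :=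
  (modByMonic_eq_self_iff hQ).2 hf

lemma qCoeff_succ_of_degree_lt (hQ : Q.Monic) {f : K[X]} (hf : f.degree < Q.degree) (i : ℕ) :
    qCoeff Q (i + 1) f = 0 := by
  rw [qCoeff, (divByMonic_eq_zero_iff hQ).2 hf, qCoeff_zero_right]

lemma qCoeff_zero_mul_self (hQ : Q.Monic) (x : K[X]) : qCoeff Q 0 (x * Q) = 0 :=
  mul_self_modByMonic hQ

lemma qCoeff_succ_mul_self (hQ : Q.Monic) (x : K[X]) (i : ℕ) :
    qCoeff Q (i + 1) (x * Q) = qCoeff Q i x := by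
  rw [qCoeff, mul_comm, mul_divByMonic_cancel_left x hQ]

lemma qCoeff_eq_zero_of_natDegree_lt (hQ : Q.Monic) (hD : 0 < Q.natDegree) :
    ∀ i (f : K[X]), f.natDegree < i → qCoeff Q i f = 0
  | 0, _, hf => absurd hf (Nat.not_lt_zero _)
  | i + 1, f, hf => by
    rw [qCoeff]
    by_cases h0 : f /ₘ Q = 0
    · rw [h0, qCoeff_zero_right]
    have hQf : Q.natDegree ≤ f.natDegree :=
      natDegree_le_natDegree (not_lt.1 (mt (divByMonic_eq_zero_iff hQ).2 h0))
    exact qCoeff_eq_zero_of_natDegree_lt hQ hD i _ (by rw [natDegree_divByMonic f hQ]; omega)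

lemma sum_qCoeff_mul_pow (hQ : Q.Monic) (hD : 0 < Q.natDegree) :
    ∀ N (f : K[X]), f.natDegree ≤ N → ∑ i ∈ Finset.range (N + 1), qCoeff Q i f * Q ^ i = f
  | 0, f, hf => by
    rw [Finset.sum_range_one, pow_zero, mul_one]
    exact qCoeff_zero_of_degree_lt hQ (degree_lt_degree (by omega))
  | N + 1, f, hf => by
    have hdiv : (f /ₘ Q).natDegree ≤ N := by rw [natDegree_divByMonic f hQ]; omega
    rw [Finset.sum_range_succ', pow_zero, mul_one]
    simp_rw [pow_succ, ← mul_assoc, qCoeff, ← Finset.sum_mul, sum_qCoeff_mul_pow hQ hD N _ hdiv]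
    rw [mul_comm, add_comm]
    exact modByMonic_add_div f Q

end QExpansion

section Truncation

variable {K Γ : Type*} [Field K] [AddCommGroup Γ] [LinearOrder Γ] [IsOrderedAddMonoid Γ]
  {μ : K[X] → WithTop Γ} {Q f : K[X]}

lemma trunc_le (hμ : IsValAdd μ) (hQ : Q.Monic) (hD : 0 < Q.natDegree) (f : K[X]) (i : ℕ) :
    trunc μ Q f ≤ μ (qCoeff Q i f * Q ^ i) := by
  by_cases hi : i ≤ f.natDegree
  · exact Finset.inf_le (Finset.mem_range.2 (Nat.lt_succ_of_le hi))
  · rw [qCoeff_eq_zero_of_natDegree_lt hQ hD i f (not_le.1 hi), zero_mul, hμ.map_zero]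
    exact le_top

lemma le_trunc {V : WithTop Γ} (h : ∀ i, V ≤ μ (qCoeff Q i f * Q ^ i)) : V ≤ trunc μ Q f :=
  Finset.le_inf fun i _ => h i

lemma trunc_one (hμ : IsValAdd μ) (f : K[X]) : trunc μ 1 f = ⊤ :=
  top_le_iff.1 (le_trunc fun i => by rw [qCoeff_one_left, zero_mul, hμ.map_zero])

lemma trunc_le_val (hμ : IsValAdd μ) (hQ : Q.Monic) (hD : 0 < Q.natDegree) (f : K[X]) :
    trunc μ Q f ≤ μ f := by
  conv_rhs => rw [← sum_qCoeff_mul_pow hQ hD f.natDegree f le_rfl]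
  exact hμ.isPseudoValAdd.le_map_sum fun i _ => trunc_le hμ hQ hD f i

lemma trunc_ne_top (hμ : IsValAdd μ) (hQ : Q.Monic) (hD : 0 < Q.natDegree) (hf : f ≠ 0) :
    trunc μ Q f ≠ ⊤ :=
  ne_top_of_le_ne_top (hμ.ne_top hf) (trunc_le_val hμ hQ hD f)

lemma trunc_eq_of_degree_lt (hμ : IsValAdd μ) (hQ : Q.Monic) (hD : 0 < Q.natDegree)
    (hf : f.degree < Q.degree) : trunc μ Q f = μ f := by
  refine (trunc_le_val hμ hQ hD f).antisymm (le_trunc fun i => ?_)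
  cases i with
  | zero => rw [qCoeff_zero_of_degree_lt hQ hf, pow_zero, mul_one]
  | succ i => rw [qCoeff_succ_of_degree_lt hQ hf, zero_mul, hμ.map_zero]; exact le_top

lemma trunc_add (hμ : IsValAdd μ) (hQ : Q.Monic) (hD : 0 < Q.natDegree) (f g : K[X]) :
    min (trunc μ Q f) (trunc μ Q g) ≤ trunc μ Q (f + g) :=
  le_trunc fun i => by
    rw [qCoeff_add hQ, add_mul]
    exact (min_le_min (trunc_le hμ hQ hD f i) (trunc_le hμ hQ hD g i)).trans (hμ.map_add _ _)

lemma trunc_zero (hμ : IsValAdd μ) : trunc μ Q 0 = ⊤ :=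
  top_le_iff.1 (le_trunc fun i => by rw [qCoeff_zero_right, zero_mul, hμ.map_zero])

lemma trunc_mul_pow_ge (hμ : IsValAdd μ) (hQ : Q.Monic) (hD : 0 < Q.natDegree) (x : K[X]) :
    ∀ n : ℕ, trunc μ Q x + n • μ Q ≤ trunc μ Q (x * Q ^ n)
  | 0 => by simp
  | n + 1 => by
    refine le_trunc fun i => ?_
    rw [pow_succ, ← mul_assoc]
    cases i with
    | zero => rw [qCoeff_zero_mul_self hQ, zero_mul, hμ.map_zero]; exact le_top
    | succ i =>
      rw [qCoeff_succ_mul_self hQ, pow_succ, ← mul_assoc, hμ.map_mul, succ_nsmul, ← add_assoc]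
      exact add_le_add_left ((trunc_mul_pow_ge hμ hQ hD x n).trans
        (trunc_le hμ hQ hD _ i)) _

end Truncation

lemma Polynomial.degree_hasseDeriv_le {R : Type*} [Semiring R] (p : R[X]) (k : ℕ) :
    (hasseDeriv k p).degree ≤ p.degree := by
  rcases eq_or_ne p 0 with rfl | hp
  · simp
  rw [degree_eq_natDegree hp]
  exact degree_le_of_natDegree_le ((natDegree_hasseDeriv_le p k).trans (Nat.sub_le _ _))

lemma Polynomial.degree_hasseDeriv_lt {R : Type*} [Semiring R] {p : R[X]} (hp : p ≠ 0) {k : ℕ}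
    (hk : 0 < k) : (hasseDeriv k p).degree < p.degree := by
  rcases eq_or_ne (hasseDeriv k p) 0 with h | h
  · rw [h, degree_zero, bot_lt_iff_ne_bot, Ne, degree_eq_bot]
    exact hp
  have hpk : k ≤ p.natDegree := not_lt.1 fun hlt => h (hasseDeriv_eq_zero_of_lt_natDegree p k hlt)
  exact degree_lt_degree ((natDegree_hasseDeriv_le p k).trans_lt (by omega))

section KeyPolynomial

variable {K Γ : Type*} [Field K] [AddCommGroup Γ] [LinearOrder Γ] [IsOrderedAddMonoid Γ]
  {μ : K[X] → WithTop Γ} {Q : K[X]} {b : ℕ}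

/-- `b` is the largest index at which `ε_μ(Q) = max_l (μ Q - μ (∂_l Q)) / l` is attained. -/
structure IsMaxEpsIndex (μ : K[X] → WithTop Γ) (Q : K[X]) (b : ℕ) : Prop where
  pos : 0 < b
  ne_top : μ (hasseDeriv b Q) ≠ ⊤
  slopeLE : ∀ l, SlopeLE (μ Q) (μ (hasseDeriv l Q)) l (μ Q) (μ (hasseDeriv b Q)) b
  slopeLT : ∀ l, b < l → SlopeLT (μ Q) (μ (hasseDeriv l Q)) l (μ Q) (μ (hasseDeriv b Q)) b

lemma Polynomial.Monic.hasseDeriv_natDegree (hQ : Q.Monic) : hasseDeriv Q.natDegree Q = 1 := by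
  ext n
  rw [hasseDeriv_coeff, coeff_one]
  rcases Nat.eq_zero_or_pos n with rfl | hn
  · simp [hQ.coeff_natDegree]
  · rw [coeff_eq_zero_of_natDegree_lt (by omega), mul_zero, if_neg hn.ne']

lemma exists_isMaxEpsIndex (hμ : IsValAdd μ) (hQ : Q.Monic) (hD : 0 < Q.natDegree) :
    ∃ b, IsMaxEpsIndex μ Q b := by
  classical
  have hQtop : μ Q ≠ ⊤ := hμ.ne_top hQ.ne_zero
  set s := (Finset.Icc 1 Q.natDegree).filter fun l => μ (hasseDeriv l Q) ≠ ⊤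
  have hmem : ∀ {l}, l ∈ s → 0 < l ∧ μ (hasseDeriv l Q) ≠ ⊤ := fun hl => by
    simp only [s, Finset.mem_filter, Finset.mem_Icc] at hl
    exact ⟨hl.1.1, hl.2⟩
  have hout : ∀ l, 0 < l → l ∉ s → μ (hasseDeriv l Q) = ⊤ := fun l hl hls => by
    by_contra htop
    refine hls (Finset.mem_filter.2
      ⟨Finset.mem_Icc.2 ⟨hl, not_lt.1 fun hlt => htop ?_⟩, htop⟩)
    rw [hasseDeriv_eq_zero_of_lt_natDegree Q l hlt, hμ.map_zero]
  have hDs : Q.natDegree ∈ s := Finset.mem_filter.2 ⟨Finset.mem_Icc.2 ⟨hD, le_rfl⟩,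
    by rw [hQ.hasseDeriv_natDegree, hμ.map_one]; exact WithTop.zero_ne_top⟩
  obtain ⟨b, hb, hmax, hlast⟩ := Finset.exists_last_greatest_of_total
    (r := fun l m => SlopeLE (μ Q) (μ (hasseDeriv l Q)) l (μ Q) (μ (hasseDeriv m Q)) m)
    ⟨_, hDs⟩ (fun _ _ _ _ => slopeLE_total)
    (fun _ _ _ hm _ _ h₁ h₂ => h₁.trans h₂ (hmem hm).1 hQtop (hmem hm).2)
  refine ⟨b, (hmem hb).1, (hmem hb).2, fun l => ?_, fun l hbl => ?_⟩
  · rcases Nat.eq_zero_or_pos l with rfl | hl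
    · rw [hasseDeriv_zero']
      exact slopeLE_zero _
    by_cases hls : l ∈ s
    · exact hmax l hls
    · rw [hout l hl hls]
      exact slopeLE_top (hmem hb).1
  · by_cases hls : l ∈ s
    · exact not_slopeLE.1 (hlast l hls hbl)
    · rw [hout l ((hmem hb).1.trans hbl) hls]
      exact slopeLT_top (hmem hb).1 hQtop (hmem hb).2

namespace IsMaxEpsIndex

lemma natDegree_pos (hμ : IsValAdd μ) (hb : IsMaxEpsIndex μ Q b) : 0 < Q.natDegree :=
  Nat.pos_of_ne_zero fun hD => hb.ne_top <| by
    rw [hasseDeriv_eq_zero_of_lt_natDegree Q b (hD ▸ hb.pos), hμ.map_zero]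

lemma val_ne_top (hμ : IsValAdd μ) (hb : IsMaxEpsIndex μ Q b) : μ Q ≠ ⊤ :=
  hμ.ne_top fun hQ => hb.ne_top (by rw [hQ, map_zero, hμ.map_zero])

lemma slopeLT_of_degree_lt (hμ : IsValAdd μ) (hQ : IsABKP μ Q) (hb : IsMaxEpsIndex μ Q b)
    {c : K[X]} (hc : c ≠ 0) (hdeg : c.degree < Q.degree) {k : ℕ} (hk : 0 < k) :
    SlopeLT (μ c) (μ (hasseDeriv k c)) k (μ Q) (μ (hasseDeriv b Q)) b := by
  obtain ⟨j, hj, hjtop, hlt⟩ := hQ.2 c hc hdeg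
  exact SlopeLT.trans_slopeLE (hlt k hk) (hb.slopeLE j) hj hb.pos (hμ.ne_top hQ.1.ne_zero) hjtop
    hb.ne_top

lemma slopeLE_of_degree_lt (hμ : IsValAdd μ) (hQ : IsABKP μ Q) (hb : IsMaxEpsIndex μ Q b)
    {c : K[X]} (hdeg : c.degree < Q.degree) (k : ℕ) :
    SlopeLE (μ c) (μ (hasseDeriv k c)) k (μ Q) (μ (hasseDeriv b Q)) b := by
  rcases eq_or_ne c 0 with rfl | hc
  · rw [map_zero, hμ.map_zero]
    exact slopeLE_top hb.pos
  rcases Nat.eq_zero_or_pos k with rfl | hk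
  · rw [hasseDeriv_zero']
    exact slopeLE_zero _
  exact (hb.slopeLT_of_degree_lt hμ hQ hc hdeg hk).slopeLE

end IsMaxEpsIndex

end KeyPolynomial

section Powers

variable {K Γ : Type*} [Field K] [AddCommGroup Γ] [LinearOrder Γ] [IsOrderedAddMonoid Γ]
  {μ : K[X] → WithTop Γ} {Q : K[X]} {b : ℕ}

namespace IsMaxEpsIndex

lemma slopeLE_hasseDeriv_pow (hμ : IsValAdd μ) (hb : IsMaxEpsIndex μ Q b) (i l : ℕ) :
    SlopeLE (i • μ Q) (μ (hasseDeriv l (Q ^ i))) l (μ Q) (μ (hasseDeriv b Q)) b :=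
  hμ.isPseudoValAdd.slopeLE_hasseDeriv_pow (by rw [hμ.map_one]) hb.pos hb.slopeLE i l

lemma slopeLT_hasseDeriv_pow_mul (hμ : IsValAdd μ) (hb : IsMaxEpsIndex μ Q b) {i k m : ℕ}
    (hi : ∀ l, b * i < l →
      SlopeLT (i • μ Q) (μ (hasseDeriv l (Q ^ i))) l (μ Q) (μ (hasseDeriv b Q)) b)
    (h : b * i < k ∨ b < m) :
    SlopeLT ((i + 1) • μ Q) (μ (hasseDeriv k (Q ^ i) * hasseDeriv m Q)) (k + m)
      (μ Q) (μ (hasseDeriv b Q)) b := by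
  rw [hμ.map_mul, succ_nsmul]
  rcases h with h | h
  · exact (hi k h).add_slopeLE (hb.slopeLE m) (hb.val_ne_top hμ) hb.ne_top
  · exact (hb.slopeLE_hasseDeriv_pow hμ i k).add_slopeLT (hb.slopeLT m h)
      (WithTop.nsmul_ne_top (hb.val_ne_top hμ) i) hb.ne_top

lemma slopeLT_hasseDeriv_pow (hμ : IsValAdd μ) (hb : IsMaxEpsIndex μ Q b) :
    ∀ i l, b * i < l →
      SlopeLT (i • μ Q) (μ (hasseDeriv l (Q ^ i))) l (μ Q) (μ (hasseDeriv b Q)) b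
  | 0, l, hl => by
    rw [pow_zero, hasseDeriv_eq_zero_of_lt_natDegree 1 l (by simpa using hl), hμ.map_zero]
    exact slopeLT_top hb.pos (by simp) hb.ne_top
  | i + 1, l, hl => by
    obtain ⟨k, m, rfl, hle⟩ := hμ.isPseudoValAdd.exists_le_map_hasseDeriv_mul (Q ^ i) Q l
    rw [pow_succ]
    exact (hb.slopeLT_hasseDeriv_pow_mul hμ (hb.slopeLT_hasseDeriv_pow hμ i)
      (by rw [mul_add_one] at hl; omega)).mono le_rfl hle

lemma val_hasseDeriv_pow_le (hμ : IsValAdd μ) (hb : IsMaxEpsIndex μ Q b) :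
    ∀ i, μ (hasseDeriv (b * i) (Q ^ i)) ≤ i • μ (hasseDeriv b Q)
  | 0 => by simp [hμ.map_one]
  | i + 1 => by
    rw [pow_succ, hasseDeriv_mul]
    refine hμ.map_sum_le_of_lt (j₀ := (b * i, b))
      (Finset.HasAntidiagonal.mem_antidiagonal.2 (mul_add_one b i).symm) ?_
      fun ⟨k, m⟩ hkm hne => ?_
    · rw [hμ.map_mul, succ_nsmul]
      exact add_le_add_left (hb.val_hasseDeriv_pow_le hμ i) _
    have hkm : k + m = b * (i + 1) := Finset.HasAntidiagonal.mem_antidiagonal.1 hkm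
    have h : b * i < k ∨ b < m := by
      by_contra! h
      exact hne (Prod.ext (by simp only; linarith) (by simp only; linarith))
    have := hb.slopeLT_hasseDeriv_pow_mul hμ (hb.slopeLT_hasseDeriv_pow hμ i) h
    rwa [hkm, ← zero_add ((i + 1) • μ Q), slopeLT_add_nsmul_iff hb.pos (hb.val_ne_top hμ),
      zero_add] at this

lemma val_hasseDeriv_mul_pow_le (hμ : IsValAdd μ) (hQ : IsABKP μ Q) (hb : IsMaxEpsIndex μ Q b)
    {c : K[X]} (hc : c.degree < Q.degree) (i : ℕ) :
    μ (hasseDeriv (b * i) (c * Q ^ i)) ≤ μ c + i • μ (hasseDeriv b Q) := by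
  rcases eq_or_ne c 0 with rfl | hc0
  · simp [hμ.map_zero]
  rw [hasseDeriv_mul]
  refine hμ.map_sum_le_of_lt (j₀ := (0, b * i))
    (Finset.HasAntidiagonal.mem_antidiagonal.2 (zero_add _)) ?_ fun ⟨k, l⟩ hkl hne => ?_
  · rw [hasseDeriv_zero', hμ.map_mul]
    exact add_le_add_right (hb.val_hasseDeriv_pow_le hμ i) _
  have hkl : k + l = b * i := Finset.HasAntidiagonal.mem_antidiagonal.1 hkl
  have hk : 0 < k := Nat.pos_of_ne_zero fun hk => hne (Prod.ext hk (by simp only; omega))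
  have := (hb.slopeLT_of_degree_lt hμ hQ hc0 hc hk).add_slopeLE (hb.slopeLE_hasseDeriv_pow hμ i l)
    (WithTop.nsmul_ne_top (hb.val_ne_top hμ) i) hb.ne_top
  rwa [hkl, slopeLT_add_nsmul_iff hb.pos (hb.val_ne_top hμ), ← hμ.map_mul] at this

end IsMaxEpsIndex

end Powers

section Multiplicativity

variable {K Γ : Type*} [Field K] [AddCommGroup Γ] [LinearOrder Γ] [IsOrderedAddMonoid Γ]
  {μ : K[X] → WithTop Γ} {Q g h : K[X]} {b : ℕ}

lemma degree_mul_divByMonic_lt (hQ : Q.Monic) (hg : g.degree < Q.degree)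
    (hh : h.degree < Q.degree) : (g * h /ₘ Q).degree < Q.degree := by
  rcases eq_or_ne (g * h /ₘ Q) 0 with h0 | h0
  · rw [h0, degree_zero, bot_lt_iff_ne_bot, Ne, degree_eq_bot]
    exact hQ.ne_zero
  have hg0 : g ≠ 0 := by rintro rfl; simp at h0
  have hh0 : h ≠ 0 := by rintro rfl; simp at h0
  refine degree_lt_degree ?_
  rw [natDegree_divByMonic _ hQ, natDegree_mul hg0 hh0]
  have := natDegree_lt_natDegree hg0 hg
  have := natDegree_lt_natDegree hh0 hh
  omega

/-- Write `g h = r + Q s`. A drop `μ (Q s) < μ (g h)` would force both `μ (∂_b (g h))` and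
`μ (∂_b r)` above `μ s + μ (∂_b Q)`, whereas `μ (∂_b (Q s)) ≤ μ s + μ (∂_b Q)`. -/
lemma val_mul_le_val_mul_divByMonic (hμ : IsValAdd μ) (hQ : IsABKP μ Q)
    (hb : IsMaxEpsIndex μ Q b) (hg : g.degree < Q.degree) (hh : h.degree < Q.degree) :
    μ (g * h) ≤ μ (Q * (g * h /ₘ Q)) := by
  set s := g * h /ₘ Q
  set r := g * h %ₘ Q
  have hsum : r + Q * s = g * h := modByMonic_add_div _ _
  have hQtop := hb.val_ne_top hμ
  by_contra! hlt
  have hr : μ r = μ s + μ Q := by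
    rw [eq_sub_of_add_eq hsum, hμ.map_sub_eq_of_lt_right hlt, hμ.map_mul, add_comm]
  have hstop : μ s ≠ ⊤ := by
    have := hlt.ne_top
    rw [hμ.map_mul] at this
    exact (WithTop.add_ne_top.1 this).2
  have hr0 : r ≠ 0 := fun h0 =>
    WithTop.add_ne_top.2 ⟨hstop, hQtop⟩ (by rw [← hr, h0, hμ.map_zero])
  have h₁ : μ (hasseDeriv b (Q * s)) ≤ μ s + μ (hasseDeriv b Q) := by
    simpa [mul_comm] using
      hb.val_hasseDeriv_mul_pow_le hμ hQ (degree_mul_divByMonic_lt hQ.1 hg hh) 1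
  have h₂ : μ s + μ (hasseDeriv b Q) < μ (hasseDeriv b (g * h)) := by
    refine (slopeLT_add_iff hb.pos hQtop).1 ((hμ.isPseudoValAdd.slopeLE_hasseDeriv_mul
      (hb.slopeLE_of_degree_lt hμ hQ hg) (hb.slopeLE_of_degree_lt hμ hQ hh) b).slopeLT_of_lt
      ?_ hb.pos hb.ne_top)
    rwa [← hμ.map_mul, ← hμ.map_mul, mul_comm s]
  have h₃ : μ s + μ (hasseDeriv b Q) < μ (hasseDeriv b r) := by
    refine (slopeLT_add_iff hb.pos hQtop).1 ?_
    rw [← hr]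
    exact hb.slopeLT_of_degree_lt hμ hQ hr0 (degree_modByMonic_lt _ hQ.1) hb.pos
  have hsub : hasseDeriv b (Q * s) = hasseDeriv b (g * h) - hasseDeriv b r := by
    rw [← hsum, map_add, add_sub_cancel_left]
  have := (lt_min h₂ h₃).trans_le (hμ.map_sub _ _)
  rw [← hsub] at this
  exact lt_irrefl _ (this.trans_le h₁)

lemma val_mul_le_trunc_mul (hμ : IsValAdd μ) (hQ : IsABKP μ Q) (hb : IsMaxEpsIndex μ Q b)
    (hg : g.degree < Q.degree) (hh : h.degree < Q.degree) : μ (g * h) ≤ trunc μ Q (g * h) := by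
  have hs := degree_mul_divByMonic_lt hQ.1 hg hh
  have hkey := val_mul_le_val_mul_divByMonic hμ hQ hb hg hh
  refine le_trunc fun i => ?_
  match i with
  | 0 =>
    show μ (g * h) ≤ μ (g * h %ₘ Q * Q ^ 0)
    rw [pow_zero, mul_one, eq_sub_of_add_eq (modByMonic_add_div (g * h) Q)]
    exact (le_min le_rfl hkey).trans (hμ.map_sub _ _)
  | 1 =>
    show μ (g * h) ≤ μ (qCoeff Q 0 (g * h /ₘ Q) * Q ^ 1)
    rwa [qCoeff_zero_of_degree_lt hQ.1 hs, pow_one, mul_comm _ Q]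
  | i + 2 =>
    show μ (g * h) ≤ μ (qCoeff Q (i + 1) (g * h /ₘ Q) * Q ^ (i + 2))
    rw [qCoeff_succ_of_degree_lt hQ.1 hs, zero_mul, hμ.map_zero]
    exact le_top

lemma trunc_add_trunc_le_trunc_mul (hμ : IsValAdd μ) (hQ : IsABKP μ Q)
    (hb : IsMaxEpsIndex μ Q b) (x y : K[X]) :
    trunc μ Q x + trunc μ Q y ≤ trunc μ Q (x * y) := by
  have hD := hb.natDegree_pos hμ
  have hxy : x * y = ∑ i ∈ Finset.range (x.natDegree + 1),
      ∑ j ∈ Finset.range (y.natDegree + 1), qCoeff Q i x * qCoeff Q j y * Q ^ (i + j) := by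
    conv_lhs =>
      rw [← sum_qCoeff_mul_pow hQ.1 hD _ x le_rfl, ← sum_qCoeff_mul_pow hQ.1 hD _ y le_rfl]
    rw [Finset.sum_mul_sum]
    exact Finset.sum_congr rfl fun i _ => Finset.sum_congr rfl fun j _ => by ring
  rw [hxy]
  refine le_map_sum_of_min_le (trunc_zero hμ) (trunc_add hμ hQ.1 hD) fun i _ =>
    le_map_sum_of_min_le (trunc_zero hμ) (trunc_add hμ hQ.1 hD) fun j _ => ?_
  calc trunc μ Q x + trunc μ Q y
      ≤ μ (qCoeff Q i x * Q ^ i) + μ (qCoeff Q j y * Q ^ j) :=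
        add_le_add (trunc_le hμ hQ.1 hD x i) (trunc_le hμ hQ.1 hD y j)
    _ = μ (qCoeff Q i x * qCoeff Q j y) + (i + j) • μ Q := by
        simp only [hμ.map_mul, hμ.map_pow, add_nsmul]
        abel
    _ ≤ trunc μ Q (qCoeff Q i x * qCoeff Q j y) + (i + j) • μ Q :=
        add_le_add_left (val_mul_le_trunc_mul hμ hQ hb (degree_qCoeff_lt hQ.1 i x)
          (degree_qCoeff_lt hQ.1 j y)) _
    _ ≤ trunc μ Q (qCoeff Q i x * qCoeff Q j y * Q ^ (i + j)) := trunc_mul_pow_ge hμ hQ.1 hD _ _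

lemma isPseudoValAdd_trunc (hμ : IsValAdd μ) (hQ : IsABKP μ Q) (hb : IsMaxEpsIndex μ Q b) :
    IsPseudoValAdd (trunc μ Q) :=
  ⟨trunc_zero hμ, trunc_add hμ hQ.1 (hb.natDegree_pos hμ),
    trunc_add_trunc_le_trunc_mul hμ hQ hb⟩

end Multiplicativity

section Derivatives

variable {K Γ : Type*} [Field K] [AddCommGroup Γ] [LinearOrder Γ] [IsOrderedAddMonoid Γ]
  {μ : K[X] → WithTop Γ} {Q f : K[X]} {b : ℕ}

namespace IsMaxEpsIndex

lemma slopeLE_trunc_hasseDeriv_pow (hμ : IsValAdd μ) (hQ : IsABKP μ Q)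
    (hb : IsMaxEpsIndex μ Q b) (i l : ℕ) :
    SlopeLE (i • μ Q) (trunc μ Q (hasseDeriv l (Q ^ i))) l (μ Q) (μ (hasseDeriv b Q)) b := by
  have hD := hb.natDegree_pos hμ
  have h1 : trunc μ Q 1 = 0 := by
    rw [trunc_eq_of_degree_lt hμ hQ.1 hD (by rwa [degree_one, ← natDegree_pos_iff_degree_pos]),
      hμ.map_one]
  refine (isPseudoValAdd_trunc hμ hQ hb).slopeLE_hasseDeriv_pow h1.ge hb.pos (fun k => ?_) i l
  rcases Nat.eq_zero_or_pos k with rfl | hk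
  · have hself := trunc_mul_pow_ge hμ hQ.1 hD 1 1
    rw [h1, zero_add, one_nsmul, one_mul, pow_one] at hself
    rw [hasseDeriv_zero']
    exact (slopeLE_zero _).mono le_rfl hself
  · rw [trunc_eq_of_degree_lt hμ hQ.1 hD (degree_hasseDeriv_lt hQ.1.ne_zero hk)]
    exact hb.slopeLE k

lemma slopeLE_trunc_hasseDeriv_mul_pow (hμ : IsValAdd μ) (hQ : IsABKP μ Q)
    (hb : IsMaxEpsIndex μ Q b) {c : K[X]} (hc : c.degree < Q.degree) (m i : ℕ) :
    SlopeLE (μ (c * Q ^ m)) (trunc μ Q (hasseDeriv i (c * Q ^ m))) i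
      (μ Q) (μ (hasseDeriv b Q)) b := by
  rw [hμ.map_mul, hμ.map_pow]
  refine (isPseudoValAdd_trunc hμ hQ hb).slopeLE_hasseDeriv_mul (fun k => ?_)
    (hb.slopeLE_trunc_hasseDeriv_pow hμ hQ m) i
  rw [trunc_eq_of_degree_lt hμ hQ.1 (hb.natDegree_pos hμ)
    ((degree_hasseDeriv_le c k).trans_lt hc)]
  exact hb.slopeLE_of_degree_lt hμ hQ hc k

lemma exists_trunc_hasseDeriv_le (hμ : IsValAdd μ) (hQ : IsABKP μ Q) (hb : IsMaxEpsIndex μ Q b)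
    (f : K[X]) (i : ℕ) :
    ∃ m, trunc μ Q (hasseDeriv i (qCoeff Q m f * Q ^ m)) ≤ trunc μ Q (hasseDeriv i f) := by
  obtain ⟨m, -, hm⟩ := (isPseudoValAdd_trunc hμ hQ hb).exists_le_map_sum
    Finset.nonempty_range_add_one fun m => hasseDeriv i (qCoeff Q m f * Q ^ m)
  rw [← map_sum, sum_qCoeff_mul_pow hQ.1 (hb.natDegree_pos hμ) _ f le_rfl] at hm
  exact ⟨m, hm⟩

lemma slopeLE_trunc_hasseDeriv (hμ : IsValAdd μ) (hQ : IsABKP μ Q) (hb : IsMaxEpsIndex μ Q b)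
    (f : K[X]) (i : ℕ) :
    SlopeLE (trunc μ Q f) (trunc μ Q (hasseDeriv i f)) i (μ Q) (μ (hasseDeriv b Q)) b := by
  obtain ⟨m, hm⟩ := hb.exists_trunc_hasseDeriv_le hμ hQ f i
  exact (hb.slopeLE_trunc_hasseDeriv_mul_pow hμ hQ (degree_qCoeff_lt hQ.1 m f) m i).mono
    (trunc_le hμ hQ.1 (hb.natDegree_pos hμ) f m) hm

lemma slopeLT_trunc_hasseDeriv (hμ : IsValAdd μ) (hQ : IsABKP μ Q) (hb : IsMaxEpsIndex μ Q b)
    (hf : f ≠ 0) (hS : ∀ m, 0 < m → trunc μ Q f < μ (qCoeff Q m f * Q ^ m)) {i : ℕ}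
    (hi : 0 < i) :
    SlopeLT (trunc μ Q f) (trunc μ Q (hasseDeriv i f)) i (μ Q) (μ (hasseDeriv b Q)) b := by
  have hD := hb.natDegree_pos hμ
  obtain ⟨m, hm⟩ := hb.exists_trunc_hasseDeriv_le hμ hQ f i
  refine SlopeLT.mono ?_ le_rfl hm
  rcases Nat.eq_zero_or_pos m with rfl | hm0
  · have hc := degree_qCoeff_lt hQ.1 0 f
    rw [pow_zero, mul_one]
    rcases eq_or_ne (qCoeff Q 0 f) 0 with h0 | h0
    · rw [h0, map_zero, trunc_zero hμ]
      exact slopeLT_top hb.pos (trunc_ne_top hμ hQ.1 hD hf) hb.ne_top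
    rw [trunc_eq_of_degree_lt hμ hQ.1 hD ((degree_hasseDeriv_le _ i).trans_lt hc)]
    exact (hb.slopeLT_of_degree_lt hμ hQ h0 hc hi).mono
      (by simpa using trunc_le hμ hQ.1 hD f 0) le_rfl
  · exact (hb.slopeLE_trunc_hasseDeriv_mul_pow hμ hQ (degree_qCoeff_lt hQ.1 m f) m
      i).slopeLT_of_lt (hS m hm0) hb.pos hb.ne_top

/-- The terms `m ≠ i₀` of `∂_{b i₀} f = ∑ₘ ∂_{b i₀} (fₘ Qᵐ)` are too big to matter. -/
lemma slopeLT_val_hasseDeriv_qCoeff_mul_pow (hμ : IsValAdd μ) (hQ : IsABKP μ Q)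
    (hb : IsMaxEpsIndex μ Q b) (hf : f ≠ 0) {i₀ : ℕ}
    (hgt : ∀ m, i₀ < m → trunc μ Q f < μ (qCoeff Q m f * Q ^ m)) {m : ℕ}
    (hm : m ≠ i₀) :
    SlopeLT (trunc μ Q f) (μ (hasseDeriv (b * i₀) (qCoeff Q m f * Q ^ m))) (b * i₀)
      (μ Q) (μ (hasseDeriv b Q)) b := by
  have hD := hb.natDegree_pos hμ
  have hQtop := hb.val_ne_top hμ
  rcases eq_or_ne (qCoeff Q m f) 0 with h0 | h0
  · rw [h0, zero_mul, map_zero, hμ.map_zero]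
    exact slopeLT_top hb.pos (trunc_ne_top hμ hQ.1 hD hf) hb.ne_top
  have hfm : trunc μ Q f ≤ μ (qCoeff Q m f) + m • μ Q := by
    rw [← hμ.map_pow, ← hμ.map_mul]
    exact trunc_le hμ hQ.1 hD f m
  obtain ⟨k, l, hkl, hle⟩ :=
    hμ.isPseudoValAdd.exists_le_map_hasseDeriv_mul (qCoeff Q m f) (Q ^ m) (b * i₀)
  have hterm : SlopeLT (trunc μ Q f) (μ (hasseDeriv k (qCoeff Q m f)) + μ (hasseDeriv l (Q ^ m)))
      (k + l) (μ Q) (μ (hasseDeriv b Q)) b := by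
    rcases Nat.eq_zero_or_pos k with rfl | hk
    · rw [zero_add] at hkl
      rw [hasseDeriv_zero']
      rcases lt_or_gt_of_ne hm with hlt | hgt'
      · exact ((slopeLE_zero _).add_slopeLT (hb.slopeLT_hasseDeriv_pow hμ m l
          (hkl ▸ Nat.mul_lt_mul_of_pos_left hlt hb.pos)) (hμ.ne_top h0) hb.ne_top).mono
          hfm le_rfl
      · exact ((slopeLE_zero _).add (hb.slopeLE_hasseDeriv_pow hμ m l)).slopeLT_of_lt
          ((hgt m hgt').trans_le (by rw [hμ.map_mul, hμ.map_pow])) hb.pos hb.ne_top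
    · exact ((hb.slopeLT_of_degree_lt hμ hQ h0 (degree_qCoeff_lt hQ.1 m f) hk).add_slopeLE
        (hb.slopeLE_hasseDeriv_pow hμ m l) (WithTop.nsmul_ne_top hQtop m) hb.ne_top).mono
        hfm le_rfl
  rw [hkl, ← hμ.map_mul] at hterm
  exact hterm.mono le_rfl hle

lemma slopeLE_trunc_hasseDeriv_of_greatest_index (hμ : IsValAdd μ) (hQ : IsABKP μ Q)
    (hb : IsMaxEpsIndex μ Q b) (hf : f ≠ 0) {i₀ : ℕ}
    (heq : μ (qCoeff Q i₀ f * Q ^ i₀) = trunc μ Q f)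
    (hgt : ∀ m, i₀ < m → trunc μ Q f < μ (qCoeff Q m f * Q ^ m)) :
    SlopeLE (μ Q) (μ (hasseDeriv b Q)) b (trunc μ Q f) (trunc μ Q (hasseDeriv (b * i₀) f))
      (b * i₀) := by
  have hD := hb.natDegree_pos hμ
  have hQtop := hb.val_ne_top hμ
  have htrunc : trunc μ Q f = μ (qCoeff Q i₀ f) + i₀ • μ Q := by
    rw [← heq, hμ.map_mul, hμ.map_pow]
  rw [htrunc, slopeLE_add_nsmul_iff hb.pos hQtop]
  refine (trunc_le_val hμ hQ.1 hD _).trans ?_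
  conv_lhs =>
    rw [← sum_qCoeff_mul_pow hQ.1 hD (f.natDegree + i₀) f (Nat.le_add_right _ _), map_sum]
  refine hμ.map_sum_le_of_lt (j₀ := i₀) (Finset.mem_range.2 (by omega))
    (hb.val_hasseDeriv_mul_pow_le hμ hQ (degree_qCoeff_lt hQ.1 i₀ f) i₀) fun m _ hm => ?_
  have := hb.slopeLT_val_hasseDeriv_qCoeff_mul_pow hμ hQ hf hgt hm
  rwa [htrunc, slopeLT_add_nsmul_iff hb.pos hQtop] at this

end IsMaxEpsIndex

end Derivatives

lemma exists_greatest_index_eq_trunc {K Γ : Type*} [Field K] [AddCommGroup Γ] [LinearOrder Γ]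
    [IsOrderedAddMonoid Γ] {μ : K[X] → WithTop Γ} {Q f : K[X]} (hμ : IsValAdd μ)
    (hQ : Q.Monic) (hD : 0 < Q.natDegree) (hf : f ≠ 0)
    (hS : ∃ i, 1 ≤ i ∧ μ (qCoeff Q i f * Q ^ i) = trunc μ Q f) :
    ∃ i₀, 0 < i₀ ∧ μ (qCoeff Q i₀ f * Q ^ i₀) = trunc μ Q f ∧
      ∀ m, i₀ < m → trunc μ Q f < μ (qCoeff Q m f * Q ^ m) := by
  classical
  obtain ⟨i, hi, hieq⟩ := hS
  have hbound : ∀ m, μ (qCoeff Q m f * Q ^ m) = trunc μ Q f → m ≤ f.natDegree := fun m hm =>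
    not_lt.1 fun hlt => trunc_ne_top hμ hQ hD hf <| by
      rw [← hm, qCoeff_eq_zero_of_natDegree_lt hQ hD m f hlt, zero_mul, hμ.map_zero]
  set P := fun m => 0 < m ∧ μ (qCoeff Q m f * Q ^ m) = trunc μ Q f
  have hspec : P (Nat.findGreatest P f.natDegree) :=
    Nat.findGreatest_spec (hbound i hieq) ⟨hi, hieq⟩
  refine ⟨_, hspec.1, hspec.2, fun m hm => (trunc_le hμ hQ hD f m).lt_of_ne fun h => ?_⟩
  exact Nat.findGreatest_is_greatest hm (hbound m h.symm) ⟨hspec.1.trans hm, h.symm⟩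

theorem eps_eq_iff_S_ne_singleton_general {K Γ : Type*} [Field K] [AddCommGroup Γ] [LinearOrder Γ] [IsOrderedAddMonoid Γ]
    (μ : Polynomial K → WithTop Γ)
    (hμ : IsValAdd μ)
    (Q : Polynomial K) (hQ : IsABKP μ Q) (f : Polynomial K) (hf : f ≠ 0) :
    (EpsLE (trunc μ Q) f μ Q ∧ EpsLE μ Q (trunc μ Q) f) ↔
      ∃ i, 1 ≤ i ∧ μ (qCoeff Q i f * Q ^ i) = trunc μ Q f := by
  rcases Nat.eq_zero_or_pos Q.natDegree with hD | hD
  · -- `Q = 1` is vacuously a key polynomial; `qCoeff 1` vanishes, so `trunc μ 1 = ⊤`.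
    obtain rfl : Q = 1 := hQ.1.natDegree_eq_zero.1 hD
    refine iff_of_true ⟨fun i _ => ⟨1, le_rfl, ?_⟩, fun i hi => ⟨1, le_rfl, ?_⟩⟩
      ⟨1, le_rfl, by rw [qCoeff_one_left, zero_mul, hμ.map_zero, trunc_one hμ]⟩
    · simp [trunc_one hμ]
    · simp [trunc_one hμ, WithTop.nsmul_top_of_pos hi]
  obtain ⟨b, hb⟩ := exists_isMaxEpsIndex hμ hQ.1 hD
  constructor
  · rintro ⟨-, hle⟩
    by_contra! hS
    obtain ⟨j, hj, hslope⟩ := hle b hb.pos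
    exact not_slopeLT.2 hslope <| hb.slopeLT_trunc_hasseDeriv hμ hQ hf
      (fun m hm => (trunc_le hμ hQ.1 hD f m).lt_of_ne' (hS m hm)) hj
  · intro hS
    obtain ⟨i₀, hi₀, heq, hgt⟩ := exists_greatest_index_eq_trunc hμ hQ.1 hD hf hS
    exact ⟨fun i _ => ⟨b, hb.pos, hb.slopeLE_trunc_hasseDeriv hμ hQ f i⟩,
      fun i _ => ⟨b * i₀, Nat.mul_pos hb.pos hi₀, (hb.slopeLE i).trans
        (hb.slopeLE_trunc_hasseDeriv_of_greatest_index hμ hQ hf heq hgt) hb.pos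
        (hb.val_ne_top hμ) hb.ne_top⟩⟩

/-- `ε_{μ_Q}(f) = ε_μ(Q)` if and only if `S_{Q,μ}(f) ≠ {0}`, i.e. some
index `i ≥ 1` of the `Q`-expansion achieves the minimum in `μ_Q(f) = min_i μ(fᵢ Qⁱ)`. -/
theorem eps_eq_iff_S_ne_singleton {K Γ : Type*} [Field K] [AddCommGroup Γ] [LinearOrder Γ] [IsOrderedAddMonoid Γ]
    (ν : K → WithTop Γ) (μ : Polynomial K → WithTop Γ)
    (hν : IsValAdd ν) (hμ : IsValAdd μ) (hext : ∀ c : K, μ (Polynomial.C c) = ν c)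
    (Q : Polynomial K) (hQ : IsABKP μ Q) (f : Polynomial K) (hf : f ≠ 0) :
    (EpsLE (trunc μ Q) f μ Q ∧ EpsLE μ Q (trunc μ Q) f) ↔
      ∃ i, 1 ≤ i ∧ μ (qCoeff Q i f * Q ^ i) = trunc μ Q f :=
  eps_eq_iff_S_ne_singleton_general μ hμ Q hQ f hf
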